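/- Let G be a D-regular graph on N vertices with second eigenvalue λ < D. For every vertex set A ⊂ V, the vertex boundary ∂(A) = {v ∉ A : v has a neighbor in A} satisfies |∂(A)| ≥ min( (N−|A|)(D−λ)/(2D), (|A|/4)·(1−|A|/N)²·(D/λ − 1)² ). -/

import Mathlib

/-!
Write `e(P, Q) = ∑_{u ∈ P, v ∈ Q} M_{uv}` for the adjacency matrix `M`, and `N = |V|`. Applying
the spectral hypothesis to the centred indicators `1_P - |P|/N` (which are orthogonal to the
constant eigenvector) gives the expander mixing lemma `|e(P, Q) - D|P||Q|/N| ≤ λ √(|P||Q|)`, and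
with `P = Q = A` the sharper `e(A, A) ≤ D|A|²/N + λ|A|(N - |A|)/N`. Every edge leaving `A` ends
in `∂A`, so `|A|(N - |A|)(D - λ)/N ≤ e(A, V ∖ A) = e(A, ∂A) ≤ D|A||∂A|/N + λ√(|A||∂A|)`.
If the first term on the right dominates this yields the first bound of the minimum, otherwise
squaring yields the second.
-/

open Matrix Finset

lemma min_le_of_mul_sub_le_add_mul_sqrt {N D lam s b : ℝ} (hN : 0 < N) (hlam : 0 < lam)
    (hlamD : lam < D) (hs : 0 ≤ s) (hsN : s ≤ N) (hb : 0 ≤ b)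
    (h : s * (N - s) / N * (D - lam) ≤ D * s * b / N + lam * √s * √b) :
    min ((N - s) * (D - lam) / (2 * D)) (s / 4 * (1 - s / N) ^ 2 * (D / lam - 1) ^ 2) ≤ b := by
  obtain rfl | hs := hs.eq_or_lt
  · exact (min_le_right _ _).trans (by simpa using hb)
  rcases le_total (lam * √s * √b) (D * s * b / N) with hdom | hdom
  · refine (min_le_left _ _).trans ?_
    have h2 : s * (N - s) / N * (D - lam) ≤ 2 * (D * s * b / N) := by linarith
    field_simp at h2
    rw [div_le_iff₀ (by linarith)]
    linarith
  · refine (min_le_right _ _).trans ?_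
    have hL : 0 ≤ s * (N - s) / N * (D - lam) := by
      have := sub_nonneg.2 hsN; have := sub_nonneg.2 hlamD.le; positivity
    have hsq := pow_le_pow_left₀ hL (h.trans (add_le_add_left hdom _)) 2
    rw [show lam * √s * √b + lam * √s * √b = 2 * lam * √(s * b) by
        rw [Real.sqrt_mul hs.le]; ring, mul_pow, mul_pow, Real.sq_sqrt (by positivity)] at hsq
    field_simp
    field_simp at hsq
    nlinarith

section

variable {V : Type*} [Fintype V]

/-- For a symmetric `M` with `M *ᵥ 1 = d • 1` this says that every eigenvalue of `M` other than
the trivial one `d` has absolute value at most `lam`. -/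
def IsSecondEigenvalueBound (M : Matrix V V ℝ) (lam : ℝ) : Prop :=
  ∀ x y : V → ℝ, ∑ v, x v = 0 → ∑ v, y v = 0 →
    |x ⬝ᵥ M *ᵥ y| ≤ lam * √(x ⬝ᵥ x) * √(y ⬝ᵥ y)

lemma SimpleGraph.IsRegularOfDegree.adjMatrix_mulVec_one {G : SimpleGraph V} [DecidableRel G.Adj]
    {D : ℕ} (hreg : G.IsRegularOfDegree D) : G.adjMatrix ℝ *ᵥ 1 = (D : ℝ) • 1 := by
  ext v
  simp [hreg v]

variable [DecidableEq V]

noncomputable def centeredIndicator (P : Finset V) : V → ℝ :=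
  (P : Set V).indicator 1 - ((#P : ℝ) / Fintype.card V) • 1

lemma indicator_one_dotProduct (P : Finset V) (w : V → ℝ) :
    (P : Set V).indicator 1 ⬝ᵥ w = ∑ v ∈ P, w v := by
  simp [dotProduct, Set.indicator_apply]

lemma dotProduct_indicator_one (P : Finset V) (w : V → ℝ) :
    w ⬝ᵥ (P : Set V).indicator 1 = ∑ v ∈ P, w v := by
  rw [dotProduct_comm, indicator_one_dotProduct]

lemma sum_sum_compl_eq {M : Matrix V V ℝ} {d : ℝ} (hrow : M *ᵥ 1 = d • 1) (A : Finset V) :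
    ∑ u ∈ A, ∑ v ∈ Aᶜ, M u v = d * #A - ∑ u ∈ A, ∑ v ∈ A, M u v := by
  have row (u : V) : ∑ v, M u v = d := by simpa [mulVec, dotProduct_one] using congrFun hrow u
  rw [eq_sub_iff_add_eq, ← sum_add_distrib]
  simp [sum_compl_add_sum, row, mul_comm]

namespace SimpleGraph

variable (G : SimpleGraph V) [DecidableRel G.Adj]

def vertexBoundary (A : Finset V) : Finset V :=
  univ.filter fun v => v ∉ A ∧ ∃ u ∈ A, G.Adj u v

lemma sum_sum_adjMatrix_compl_eq_vertexBoundary {α : Type*} [AddCommMonoid α] [One α]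
    (A : Finset V) :
    ∑ u ∈ A, ∑ v ∈ Aᶜ, G.adjMatrix α u v
      = ∑ u ∈ A, ∑ v ∈ G.vertexBoundary A, G.adjMatrix α u v := by
  refine sum_congr rfl fun u hu => (sum_subset ?_ fun v hvA hv => ?_).symm
  · intro v hv
    simp_all [vertexBoundary]
  · simp_all [vertexBoundary]

end SimpleGraph

variable [Nonempty V]

lemma sum_centeredIndicator (P : Finset V) : ∑ v, centeredIndicator P v = 0 := by
  rw [← one_dotProduct, centeredIndicator, dotProduct_sub, dotProduct_smul,
    dotProduct_indicator_one, one_dotProduct_one]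
  field_simp
  simp

lemma centeredIndicator_dotProduct_self (P : Finset V) :
    centeredIndicator P ⬝ᵥ centeredIndicator P
      = #P * (Fintype.card V - #P) / Fintype.card V := by
  simp only [centeredIndicator, sub_dotProduct, dotProduct_sub, smul_dotProduct, dotProduct_smul,
    indicator_one_dotProduct, dotProduct_indicator_one, one_dotProduct_one]
  simp only [Set.indicator_apply, SetLike.mem_coe, Pi.one_apply, sum_ite_mem, inter_self,
    sum_const, nsmul_eq_mul, smul_eq_mul, mul_one]
  field_simp
  ring

lemma centeredIndicator_dotProduct_self_le (P : Finset V) :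
    centeredIndicator P ⬝ᵥ centeredIndicator P ≤ #P := by
  have hN : (0 : ℝ) < Fintype.card V := by positivity
  rw [centeredIndicator_dotProduct_self, div_le_iff₀ hN]
  nlinarith [(#P).cast_nonneg (α := ℝ)]

variable {M : Matrix V V ℝ} {d lam : ℝ}

lemma centeredIndicator_dotProduct_mulVec (hM : M.IsSymm) (hrow : M *ᵥ 1 = d • 1)
    (P Q : Finset V) :
    centeredIndicator P ⬝ᵥ M *ᵥ centeredIndicator Q
      = ∑ u ∈ P, ∑ v ∈ Q, M u v - d * #P * #Q / Fintype.card V := by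
  have hcol : (1 : V → ℝ) ᵥ* M = d • 1 := by rw [← mulVec_transpose, hM.eq, hrow]
  simp only [centeredIndicator, mulVec_sub, mulVec_smul, hrow, sub_dotProduct, dotProduct_sub,
    smul_dotProduct, dotProduct_smul, dotProduct_mulVec (1 : V → ℝ), hcol,
    indicator_one_dotProduct, dotProduct_indicator_one, one_dotProduct_one]
  simp only [mulVec, dotProduct_indicator_one, Pi.one_apply, sum_const, nsmul_eq_mul, smul_eq_mul,
    mul_one]
  field_simp
  ring

theorem IsSecondEigenvalueBound.abs_sum_sum_sub_le (hlam : IsSecondEigenvalueBound M lam)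
    (hlam0 : 0 ≤ lam) (hM : M.IsSymm) (hrow : M *ᵥ 1 = d • 1) (P Q : Finset V) :
    |∑ u ∈ P, ∑ v ∈ Q, M u v - d * #P * #Q / Fintype.card V|
      ≤ lam * √(#P : ℝ) * √(#Q : ℝ) := by
  rw [← centeredIndicator_dotProduct_mulVec hM hrow]
  refine (hlam _ _ (sum_centeredIndicator P) (sum_centeredIndicator Q)).trans ?_
  gcongr
  · exact centeredIndicator_dotProduct_self_le P
  · exact centeredIndicator_dotProduct_self_le Q

theorem IsSecondEigenvalueBound.sum_sum_self_le (hlam : IsSecondEigenvalueBound M lam)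
    (hM : M.IsSymm) (hrow : M *ᵥ 1 = d • 1) (A : Finset V) :
    ∑ u ∈ A, ∑ v ∈ A, M u v
      ≤ d * #A * #A / Fintype.card V + lam * (#A * (Fintype.card V - #A) / Fintype.card V) := by
  have h := (abs_le.mp (hlam _ _ (sum_centeredIndicator A) (sum_centeredIndicator A))).2
  have hsq : 0 ≤ centeredIndicator A ⬝ᵥ centeredIndicator A :=
    sum_nonneg fun _ _ => mul_self_nonneg _
  rw [mul_assoc, Real.mul_self_sqrt hsq, centeredIndicator_dotProduct_mulVec hM hrow,
    centeredIndicator_dotProduct_self] at h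
  linarith

theorem SimpleGraph.IsRegularOfDegree.card_vertexBoundary_mixing {G : SimpleGraph V}
    [DecidableRel G.Adj] {D : ℕ} (hreg : G.IsRegularOfDegree D)
    (hlam : IsSecondEigenvalueBound (G.adjMatrix ℝ) lam) (hlam0 : 0 ≤ lam) (A : Finset V) :
    #A * (Fintype.card V - #A) / Fintype.card V * (D - lam)
      ≤ D * #A * #(G.vertexBoundary A) / Fintype.card V
        + lam * √(#A : ℝ) * √(#(G.vertexBoundary A) : ℝ) := by
  have hN : (Fintype.card V : ℝ) ≠ 0 := by positivity
  have hrow := hreg.adjMatrix_mulVec_one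
  have hself := hlam.sum_sum_self_le G.isSymm_adjMatrix hrow A
  have hmix := (abs_le.mp (hlam.abs_sum_sum_sub_le hlam0 G.isSymm_adjMatrix hrow A
    (G.vertexBoundary A))).2
  calc #A * (Fintype.card V - #A) / Fintype.card V * (D - lam)
      = D * #A - (D * #A * #A / Fintype.card V
          + lam * (#A * (Fintype.card V - #A) / Fintype.card V)) := by
        field_simp
        ring
    _ ≤ D * #A - ∑ u ∈ A, ∑ v ∈ A, G.adjMatrix ℝ u v := by linarith
    _ = ∑ u ∈ A, ∑ v ∈ G.vertexBoundary A, G.adjMatrix ℝ u v := by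
        rw [← sum_sum_compl_eq hrow, G.sum_sum_adjMatrix_compl_eq_vertexBoundary]
    _ ≤ _ := by linarith

end

theorem stmt_9 {V : Type*} [Fintype V] [DecidableEq V] [Nonempty V]
    (G : SimpleGraph V) [DecidableRel G.Adj] (D : ℕ) (hreg : G.IsRegularOfDegree D)
    (lam : ℝ) (hlam0 : 0 < lam) (hlamD : lam < D)
    (hlam : ∀ x y : V → ℝ, (∑ v, x v) = 0 → (∑ v, y v) = 0 →
      abs (x ⬝ᵥ (G.adjMatrix ℝ).mulVec y) ≤ lam * Real.sqrt (x ⬝ᵥ x) * Real.sqrt (y ⬝ᵥ y))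
    (A : Finset V) :
    min (((Fintype.card V : ℝ) - A.card) * ((D : ℝ) - lam) / (2 * D))
        ((A.card : ℝ) / 4 * (1 - (A.card : ℝ) / (Fintype.card V : ℝ)) ^ 2
          * ((D : ℝ) / lam - 1) ^ 2) ≤
      ((Finset.univ.filter (fun v => v ∉ A ∧ ∃ u ∈ A, G.Adj u v)).card : ℝ) := by
  have hN : (0 : ℝ) < Fintype.card V := by exact_mod_cast Fintype.card_pos
  have hAN : (#A : ℝ) ≤ Fintype.card V := by exact_mod_cast card_le_univ A
  exact min_le_of_mul_sub_le_add_mul_sqrt hN hlam0 hlamD (by positivity) hAN (by positivity)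
    (hreg.card_vertexBoundary_mixing hlam hlam0.le A)
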